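/- Let W be a DMC with W(y|x) > 0 for all x, y, and such that the conditional output entropy H(W(·|x)) = −Σ_y W(y|x) log W(y|x) takes the same value for every x ∈ 𝒳. Fix 0 ≤ ε < 1. Then there exist a constant a = a(ε, W) > 0 and a threshold N = N(ε, W) such that for every n ≥ N and every (n, M_n, ε)_{max,det} code, the induced output distribution P_{Y^n} satisfies Var_{Y^n ∼ P_{Y^n}}[ log P_{Y^n}(Y^n) ] ≤ a·n. -/

import Mathlib

/-!
By the law of total variance over the uniformly distributed message `j`, `Var[log P]` splits
into the average conditional variance under `Q_j = W^n(·|c_j)` and the variance of the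
conditional means. Changing one output letter changes `log P` by at most `log ρ`, where `ρ`
bounds the ratios `W(b|x) / W(b'|x)`, so Efron–Stein bounds the conditional variances by
`n (log ρ)²`. The conditional mean is `E_{Q_j} log Q_j - D(Q_j ‖ P)`, and the first term does
not depend on `j` because `H(W(·|x))` is constant, so only the spread of `D_j = D(Q_j ‖ P)`
remains; it satisfies `D_j ≤ log M`. By Chebyshev the information density `log (Q_j / P)`
(variance `O(n)`) exceeds `D_j + u`, `u ∼ √n`, only on a set of `Q_j`-mass `(1 - ε) / 2`, so the
decoding region of `j` has `P`-mass at least `e^{-D_j - u} (1 - ε) / 2`. Summing over `j` gives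
`∑ⱼ e^{-D_j} ≤ 2 e^u / (1 - ε)`, an exponential moment of `log M - D_j ≥ 0` that bounds its
second moment by `O(u²) = O(n)`.
-/

open Filter

/-- Discrete relative entropy between two probability mass functions on a finite
alphabet (with the usual conventions `0 log 0 = 0`, and dropping terms where the
second argument vanishes — these never occur under absolute continuity). -/
noncomputable def dKL {α : Type*} [Fintype α] (p q : α → ℝ) : ℝ :=
  ∑ a, p a * Real.log (p a / q a)

/-- `p` is a probability mass function on a finite alphabet. -/
def IsPMF {α : Type*} [Fintype α] (p : α → ℝ) : Prop :=
  (∀ a, 0 ≤ p a) ∧ ∑ a, p a = 1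

/-- A discrete memoryless channel: a stochastic matrix. -/
def IsDMC {𝒳 𝒴 : Type*} [Fintype 𝒳] [Fintype 𝒴] (W : 𝒳 → 𝒴 → ℝ) : Prop :=
  ∀ x, IsPMF (W x)

/-- Output distribution `pW` induced by input distribution `p`. -/
noncomputable def outDist {𝒳 𝒴 : Type*} [Fintype 𝒳] [Fintype 𝒴]
    (p : 𝒳 → ℝ) (W : 𝒳 → 𝒴 → ℝ) : 𝒴 → ℝ :=
  fun y => ∑ x, p x * W x y

/-- Capacity of a DMC: `C = max_p ∑_x p(x) D(W(·|x) ‖ pW)`. -/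
noncomputable def capacity {𝒳 𝒴 : Type*} [Fintype 𝒳] [Fintype 𝒴]
    (W : 𝒳 → 𝒴 → ℝ) : ℝ :=
  sSup { r | ∃ p : 𝒳 → ℝ, IsPMF p ∧ r = ∑ x, p x * dKL (W x) (outDist p W) }

/-- The blocklength-`n` memoryless extension of `W`: `P_{Y^n|X^n=x}(y) = ∏ᵢ W(yᵢ|xᵢ)`. -/
noncomputable def prodW {𝒳 𝒴 : Type*} [Fintype 𝒳] [Fintype 𝒴]
    (W : 𝒳 → 𝒴 → ℝ) (n : ℕ) : (Fin n → 𝒳) → (Fin n → 𝒴) → ℝ :=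
  fun x y => ∏ i, W (x i) (y i)

/-- Output pmf `P_{Y^n}` induced by the codebook `c` (uniform messages). -/
noncomputable def codeOut {𝒳 𝒴 : Type*} [Fintype 𝒳] [Fintype 𝒴]
    (W : 𝒳 → 𝒴 → ℝ) {n M : ℕ} (c : Fin M → Fin n → 𝒳) : (Fin n → 𝒴) → ℝ :=
  fun y => (M : ℝ)⁻¹ * ∑ j, prodW W n (c j) y

/-- Variance of `log P_{Y^n}(Y^n)` when `Y^n ∼ P_{Y^n}`. -/
noncomputable def outLogVar {𝒳 𝒴 : Type*} [Fintype 𝒳] [Fintype 𝒴]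
    (W : 𝒳 → 𝒴 → ℝ) {n M : ℕ} (c : Fin M → Fin n → 𝒳) : ℝ :=
  (∑ y, codeOut W c y * Real.log (codeOut W c y) ^ 2)
    - (∑ y, codeOut W c y * Real.log (codeOut W c y)) ^ 2

open Finset Real

/-- `outLogVar W c` is by definition `discreteVar (codeOut W c) fun y => log (codeOut W c y)`. -/
noncomputable def discreteVar {α : Type*} [Fintype α] (p X : α → ℝ) : ℝ :=
  (∑ a, p a * X a ^ 2) - (∑ a, p a * X a) ^ 2

section DiscreteVariance

variable {α ι : Type*} [Fintype α] [Fintype ι]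

theorem sum_mul_sub_sq_eq {p : α → ℝ} (hp : ∑ a, p a = 1) (X : α → ℝ) (t : ℝ) :
    ∑ a, p a * (X a - t) ^ 2 = discreteVar p X + ((∑ a, p a * X a) - t) ^ 2 := by
  have expand : ∀ a, p a * (X a - t) ^ 2 = p a * X a ^ 2 - 2 * t * (p a * X a) + t ^ 2 * p a :=
    fun a => by ring
  simp only [expand, sum_add_distrib, sum_sub_distrib, ← mul_sum, hp, discreteVar]
  ring

theorem discreteVar_le_sum_mul_sub_sq {p : α → ℝ} (hp : ∑ a, p a = 1) (X : α → ℝ) (t : ℝ) :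
    discreteVar p X ≤ ∑ a, p a * (X a - t) ^ 2 := by
  rw [sum_mul_sub_sq_eq hp]
  exact le_add_of_nonneg_right (sq_nonneg _)

theorem discreteVar_le_sq_of_abs_sub_le {p : α → ℝ} (hp0 : ∀ a, 0 ≤ p a) (hp : ∑ a, p a = 1)
    {X : α → ℝ} {κ : ℝ} (hX : ∀ a b, |X a - X b| ≤ κ) : discreteVar p X ≤ κ ^ 2 := by
  obtain ⟨b⟩ : Nonempty α := by
    by_contra h
    simp [not_nonempty_iff.mp h] at hp
  calc discreteVar p X ≤ ∑ a, p a * (X a - X b) ^ 2 := discreteVar_le_sum_mul_sub_sq hp X (X b)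
    _ ≤ ∑ a, p a * κ ^ 2 := by
      refine sum_le_sum fun a _ => mul_le_mul_of_nonneg_left ?_ (hp0 a)
      exact sq_le_sq' (abs_le.mp (hX a b)).1 (abs_le.mp (hX a b)).2
    _ = κ ^ 2 := by rw [← sum_mul, hp, one_mul]

theorem abs_sum_mul_sub_sum_mul_le {p : α → ℝ} (hp0 : ∀ a, 0 ≤ p a) (hp : ∑ a, p a = 1)
    {X Y : α → ℝ} {κ : ℝ} (hXY : ∀ a, |X a - Y a| ≤ κ) :
    |∑ a, p a * X a - ∑ a, p a * Y a| ≤ κ := by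
  calc |∑ a, p a * X a - ∑ a, p a * Y a| = |∑ a, p a * (X a - Y a)| := by
        simp only [mul_sub, sum_sub_distrib]
    _ ≤ ∑ a, p a * |X a - Y a| := by
        refine (abs_sum_le_sum_abs _ _).trans_eq (sum_congr rfl fun a _ => ?_)
        rw [abs_mul, abs_of_nonneg (hp0 a)]
    _ ≤ ∑ a, p a * κ := sum_le_sum fun a _ => mul_le_mul_of_nonneg_left (hXY a) (hp0 a)
    _ = κ := by rw [← sum_mul, hp, one_mul]

/-- Law of total variance, with `m₁ j` and `m₂ j` the first two moments of the `j`-th component. -/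
theorem sum_mul_sub_sq_sum_mul_eq (w m₁ m₂ : ι → ℝ) :
    (∑ j, w j * m₂ j) - (∑ j, w j * m₁ j) ^ 2
      = ∑ j, w j * (m₂ j - m₁ j ^ 2) + discreteVar w m₁ := by
  simp only [discreteVar, mul_sub, sum_sub_distrib]
  ring

theorem discreteVar_mixture (w : ι → ℝ) (Q : ι → α → ℝ) (X : α → ℝ) :
    discreteVar (fun a => ∑ j, w j * Q j a) X
      = ∑ j, w j * discreteVar (Q j) X + discreteVar w (fun j => ∑ a, Q j a * X a) := by
  have moment : ∀ Y : α → ℝ, ∑ a, (∑ j, w j * Q j a) * Y a = ∑ j, w j * ∑ a, Q j a * Y a := by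
    intro Y
    simp only [sum_mul, mul_sum, mul_assoc]
    exact sum_comm
  rw [discreteVar, moment, moment, sum_mul_sub_sq_sum_mul_eq]
  rfl

end DiscreteVariance

section ProductPMF

variable {𝒴 : Type*} [Fintype 𝒴]

theorem sum_fin_succ_pi {n : ℕ} (G : (Fin (n + 1) → 𝒴) → ℝ) :
    ∑ y, G y = ∑ b, ∑ z : Fin n → 𝒴, G (Fin.cons b z) := by
  rw [← (Fin.consEquiv fun _ => 𝒴).sum_comp, Fintype.sum_prod_type]
  rfl

theorem sum_prod_mul_eq_sum_cons {n : ℕ} (q : Fin (n + 1) → 𝒴 → ℝ) (Y : (Fin (n + 1) → 𝒴) → ℝ) :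
    ∑ y, (∏ i, q i (y i)) * Y y
      = ∑ b, q 0 b * ∑ z : Fin n → 𝒴, (∏ i, q i.succ (z i)) * Y (Fin.cons b z) := by
  rw [sum_fin_succ_pi]
  simp only [Fin.prod_univ_succ, Fin.cons_zero, Fin.cons_succ, mul_sum, mul_assoc]

theorem sum_prod_eq_one {n : ℕ} {q : Fin n → 𝒴 → ℝ} (hq : ∀ i, ∑ b, q i b = 1) :
    ∑ y : Fin n → 𝒴, ∏ i, q i (y i) = 1 := by
  classical
  rw [← Fintype.prod_sum]
  exact prod_eq_one fun i _ => hq i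

theorem sum_prod_mul_sum_apply {n : ℕ} {q : Fin n → 𝒴 → ℝ} (hq : ∀ i, ∑ b, q i b = 1)
    (φ : Fin n → 𝒴 → ℝ) :
    ∑ y : Fin n → 𝒴, (∏ i, q i (y i)) * ∑ i, φ i (y i) = ∑ i, ∑ b, q i b * φ i b := by
  induction n with
  | zero => simp
  | succ n ih =>
    have hq' : ∀ i : Fin n, ∑ b, q i.succ b = 1 := fun i => hq i.succ
    simp only [sum_prod_mul_eq_sum_cons, Fin.sum_univ_succ, Fin.cons_zero, Fin.cons_succ,
      mul_add, sum_add_distrib, ← sum_mul, sum_prod_eq_one hq', one_mul,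
      ih hq' fun i => φ i.succ, hq 0, one_mul]

/-- Efron–Stein for functions of bounded differences; the induction conditions on the first
coordinate and applies the law of total variance. -/
theorem discreteVar_prod_le_of_abs_update_sub_le {n : ℕ} {q : Fin n → 𝒴 → ℝ}
    (hq0 : ∀ i b, 0 ≤ q i b) (hq1 : ∀ i, ∑ b, q i b = 1) {h : (Fin n → 𝒴) → ℝ} {κ : ℝ}
    (hh : ∀ y i b, |h (Function.update y i b) - h y| ≤ κ) :
    discreteVar (fun y => ∏ i, q i (y i)) h ≤ n * κ ^ 2 := by
  induction n with
  | zero => simp [discreteVar]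
  | succ n ih =>
    set P' : (Fin n → 𝒴) → ℝ := fun z => ∏ i, q i.succ (z i)
    set m : 𝒴 → ℝ := fun b => ∑ z, P' z * h (Fin.cons b z)
    have hP'0 : ∀ z, 0 ≤ P' z := fun z => prod_nonneg fun i _ => hq0 _ _
    have hP'1 : ∑ z, P' z = 1 := sum_prod_eq_one fun i => hq1 i.succ
    have slice_var : ∀ b, discreteVar P' (fun z => h (Fin.cons b z)) ≤ n * κ ^ 2 := by
      refine fun b => ih (fun i => hq0 i.succ) (fun i => hq1 i.succ) fun z i b' => ?_
      simpa only [Fin.cons_update] using hh (Fin.cons b z) i.succ b'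
    have head_osc : ∀ b b', |m b - m b'| ≤ κ := by
      refine fun b b' => abs_sum_mul_sub_sum_mul_le hP'0 hP'1 fun z => ?_
      simpa only [Fin.update_cons_zero] using hh (Fin.cons b' z) 0 b
    calc discreteVar (fun y => ∏ i, q i (y i)) h
        = ∑ b, q 0 b * discreteVar P' (fun z => h (Fin.cons b z)) + discreteVar (q 0) m := by
          rw [discreteVar, sum_prod_mul_eq_sum_cons, sum_prod_mul_eq_sum_cons,
            sum_mul_sub_sq_sum_mul_eq]
          rfl
      _ ≤ ∑ b, q 0 b * (n * κ ^ 2) + κ ^ 2 := by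
          gcongr with b
          · exact hq0 0 b
          · exact slice_var b
          · exact discreteVar_le_sq_of_abs_sub_le (hq0 0) (hq1 0) head_osc
      _ = (n + 1 : ℕ) * κ ^ 2 := by
          rw [← sum_mul, hq1 0]
          push_cast
          ring

end ProductPMF

theorem IsPMF.le_one {α : Type*} [Fintype α] {p : α → ℝ} (hp : IsPMF p) (a : α) : p a ≤ 1 :=
  hp.2 ▸ single_le_sum (fun b _ => hp.1 b) (mem_univ a)

theorem sq_le_two_mul_sq_add_four_mul_exp_sub {v : ℝ} (hv : 0 ≤ v) (B : ℝ) :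
    v ^ 2 ≤ 2 * B ^ 2 + 4 * exp (v - B) := by
  have hexp := exp_pos (v - B)
  rcases le_or_gt v B with hvB | hBv
  · nlinarith [pow_le_pow_left₀ hv hvB 2]
  · have hz : (v - B) ^ 2 / 2 ≤ exp (v - B) := by
      simpa using pow_div_factorial_le_exp (v - B) (by linarith) 2
    nlinarith [sq_nonneg (v - 2 * B)]

section Divergence

variable {α ι : Type*} [Fintype α] [Fintype ι]

theorem sum_mul_sq_le_of_sum_mul_exp_le {w V : ι → ℝ} (hw0 : ∀ j, 0 ≤ w j)
    (hw1 : ∑ j, w j = 1) (hV : ∀ j, 0 ≤ V j) {B : ℝ} (hexp : ∑ j, w j * exp (V j) ≤ exp B) :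
    ∑ j, w j * V j ^ 2 ≤ 2 * B ^ 2 + 4 := by
  calc ∑ j, w j * V j ^ 2 ≤ ∑ j, w j * (2 * B ^ 2 + 4 * exp (V j - B)) :=
        sum_le_sum fun j _ =>
          mul_le_mul_of_nonneg_left (sq_le_two_mul_sq_add_four_mul_exp_sub (hV j) B) (hw0 j)
    _ = 2 * B ^ 2 + 4 * exp (-B) * ∑ j, w j * exp (V j) := by
        simp only [mul_add, sum_add_distrib, ← sum_mul, hw1, mul_sum, sub_eq_add_neg, exp_add]
        congr 1
        · ring
        · exact sum_congr rfl fun j _ => by ring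
    _ ≤ 2 * B ^ 2 + 4 * exp (-B) * exp B := by gcongr
    _ = 2 * B ^ 2 + 4 := by rw [mul_assoc, ← exp_add, neg_add_cancel, exp_zero, mul_one]

theorem dKL_le_log_of_le_mul {Q P : α → ℝ} (hQ : ∀ a, 0 < Q a) (hQ1 : ∑ a, Q a = 1)
    (hP : ∀ a, 0 < P a) {C : ℝ} (hQP : ∀ a, Q a ≤ C * P a) : dKL Q P ≤ log C := by
  calc dKL Q P ≤ ∑ a, Q a * log C := by
        refine sum_le_sum fun a _ => mul_le_mul_of_nonneg_left ?_ (hQ a).le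
        exact log_le_log (div_pos (hQ a) (hP a)) ((div_le_iff₀ (hP a)).mpr (hQP a))
    _ = log C := by rw [← sum_mul, hQ1, one_mul]

theorem sum_mul_log_eq_sub_dKL {Q P : α → ℝ} (hQ : ∀ a, 0 < Q a) (hP : ∀ a, 0 < P a) :
    ∑ a, Q a * log (P a) = ∑ a, Q a * log (Q a) - dKL Q P := by
  simp only [dKL, log_div (hQ _).ne' (hP _).ne', mul_sub, sum_sub_distrib]
  ring

theorem exp_neg_sub_mul_sub_sq_div_le {q p g : ℝ} (hq : 0 < q) (hp : 0 < p) (hg0 : 0 ≤ g)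
    (hg1 : g ≤ 1) (D : ℝ) {u : ℝ} (hu : 0 < u) :
    exp (-D - u) * (q * (g - (log (q / p) - D) ^ 2 / u ^ 2)) ≤ p * g := by
  set Z := log (q / p)
  rcases le_or_gt Z (D + u) with hZ | hZ
  · have hp_eq : p = q * exp (-Z) := by
      rw [exp_neg, exp_log (div_pos hq hp)]
      field_simp
    have hdev : 0 ≤ (Z - D) ^ 2 / u ^ 2 := by positivity
    calc exp (-D - u) * (q * (g - (Z - D) ^ 2 / u ^ 2)) ≤ exp (-D - u) * (q * g) := by
          gcongr
          linarith
      _ ≤ exp (-Z) * (q * g) :=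
          mul_le_mul_of_nonneg_right (exp_le_exp.mpr (by linarith)) (mul_nonneg hq.le hg0)
      _ = p * g := by rw [hp_eq]; ring
  · have hdev : 1 ≤ (Z - D) ^ 2 / u ^ 2 := by
      rw [one_le_div (by positivity)]
      nlinarith
    have hneg : exp (-D - u) * (q * (g - (Z - D) ^ 2 / u ^ 2)) ≤ 0 :=
      mul_nonpos_of_nonneg_of_nonpos (exp_pos _).le
        (mul_nonpos_of_nonneg_of_nonpos hq.le (by linarith))
    exact hneg.trans (mul_nonneg hp.le hg0)

/-- Change of measure from `Q` to `P` on the set where the information density `log (Q / P)`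
is at most `dKL Q P + u`; by Chebyshev that set carries all but `δ / 2` of the `Q`-mass. -/
theorem exp_neg_dKL_sub_mul_le {Q P g : α → ℝ} (hQ : ∀ a, 0 < Q a) (hQ1 : ∑ a, Q a = 1)
    (hP : ∀ a, 0 < P a) (hg0 : ∀ a, 0 ≤ g a) (hg1 : ∀ a, g a ≤ 1) {δ u : ℝ} (hu : 0 < u)
    (hg : δ ≤ ∑ a, Q a * g a)
    (hvar : discreteVar Q (fun a => log (Q a / P a)) ≤ δ / 2 * u ^ 2) :
    exp (-dKL Q P - u) * (δ / 2) ≤ ∑ a, P a * g a := by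
  set Z : α → ℝ := fun a => log (Q a / P a)
  set D := dKL Q P
  have chebyshev : ∑ a, Q a * ((Z a - D) ^ 2 / u ^ 2) ≤ δ / 2 := by
    have hcentral := sum_mul_sub_sq_eq hQ1 Z D
    rw [show ∑ a, Q a * Z a = D from rfl, sub_self, zero_pow two_ne_zero, add_zero] at hcentral
    simp only [← mul_div_assoc, ← sum_div, hcentral]
    rwa [div_le_iff₀ (by positivity)]
  calc exp (-D - u) * (δ / 2) ≤ exp (-D - u) * (∑ a, Q a * g a - δ / 2) := by
        gcongr
        linarith
    _ ≤ exp (-D - u) * ∑ a, Q a * (g a - (Z a - D) ^ 2 / u ^ 2) := by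
        gcongr
        simp only [mul_sub, sum_sub_distrib]
        linarith
    _ ≤ ∑ a, P a * g a := by
        rw [mul_sum]
        exact sum_le_sum fun a _ =>
          exp_neg_sub_mul_sub_sq_div_le (hQ a) (hP a) (hg0 a) (hg1 a) D hu

theorem sum_exp_neg_dKL_le {Q : ι → α → ℝ} {P : α → ℝ} (hQ : ∀ j a, 0 < Q j a)
    (hQ1 : ∀ j, ∑ a, Q j a = 1) (hP : ∀ a, 0 < P a) (hP1 : ∑ a, P a = 1) {g : α → ι → ℝ}
    (hg : ∀ a, IsPMF (g a)) {δ u : ℝ} (hδ : 0 < δ) (hu : 0 < u)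
    (hdec : ∀ j, δ ≤ ∑ a, Q j a * g a j)
    (hvar : ∀ j, discreteVar (Q j) (fun a => log (Q j a / P a)) ≤ δ / 2 * u ^ 2) :
    ∑ j, exp (-dKL (Q j) P) ≤ 2 / δ * exp u := by
  have decoded_mass : ∑ j, exp (-dKL (Q j) P - u) * (δ / 2) ≤ 1 := by
    calc ∑ j, exp (-dKL (Q j) P - u) * (δ / 2) ≤ ∑ j, ∑ a, P a * g a j :=
          sum_le_sum fun j _ => exp_neg_dKL_sub_mul_le (hQ j) (hQ1 j) hP (fun a => (hg a).1 j)
            (fun a => (hg a).le_one j) hu (hdec j) (hvar j)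
      _ = 1 := by simp only [sum_comm (γ := ι), ← mul_sum, (hg _).2, mul_one, hP1]
  simp only [sub_eq_add_neg, exp_add, mul_assoc, ← sum_mul] at decoded_mass
  rw [div_mul_eq_mul_div, le_div_iff₀ hδ]
  calc (∑ j, exp (-dKL (Q j) P)) * δ
      = (∑ j, exp (-dKL (Q j) P)) * (exp (-u) * (δ / 2)) * (2 * exp u) := by
        rw [exp_neg]
        field_simp
    _ ≤ 1 * (2 * exp u) := by gcongr
    _ = 2 * exp u := one_mul _

end Divergence

/-- `codeOut W c` is by definition `uniformMixture fun j => prodW W n (c j)`. -/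
noncomputable def uniformMixture {α : Type*} {M : ℕ} (Q : Fin M → α → ℝ) : α → ℝ :=
  fun a => (M : ℝ)⁻¹ * ∑ j, Q j a

section UniformMixture

variable {α : Type*} {M : ℕ} {Q : Fin M → α → ℝ}

theorem uniformMixture_pos (hM : 0 < M) (hQ : ∀ j a, 0 < Q j a) (a : α) :
    0 < uniformMixture Q a :=
  mul_pos (by positivity) (sum_pos (fun j _ => hQ j a) ⟨⟨0, hM⟩, mem_univ _⟩)

theorem sum_uniformMixture [Fintype α] (hM : 0 < M) (hQ1 : ∀ j, ∑ a, Q j a = 1) :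
    ∑ a, uniformMixture Q a = 1 := by
  simp only [uniformMixture, ← mul_sum, sum_comm (γ := α), hQ1, sum_const, card_univ,
    Fintype.card_fin, nsmul_eq_mul, mul_one]
  exact inv_mul_cancel₀ (by positivity)

theorem le_mul_uniformMixture (hQ : ∀ j a, 0 ≤ Q j a) (j : Fin M) (a : α) :
    Q j a ≤ M * uniformMixture Q a := by
  have hM : (M : ℝ) ≠ 0 := Nat.cast_ne_zero.mpr (Fin.pos j).ne'
  rw [uniformMixture, ← mul_assoc, mul_inv_cancel₀ hM, one_mul]
  exact single_le_sum (fun k _ => hQ k a) (mem_univ j)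

theorem discreteVar_sum_mul_log_uniformMixture_le [Fintype α] (hM : 0 < M)
    (hQ : ∀ j a, 0 < Q j a) (hQ1 : ∀ j, ∑ a, Q j a = 1) {h : ℝ}
    (hH : ∀ j, ∑ a, Q j a * log (Q j a) = h) {g : α → Fin M → ℝ} (hg : ∀ a, IsPMF (g a))
    {δ u : ℝ} (hδ : 0 < δ) (hu : 0 < u) (hdec : ∀ j, δ ≤ ∑ a, Q j a * g a j)
    (hvar : ∀ j, discreteVar (Q j) (fun a => log (Q j a / uniformMixture Q a)) ≤ δ / 2 * u ^ 2) :
    discreteVar (fun _ => (M : ℝ)⁻¹) (fun j => ∑ a, Q j a * log (uniformMixture Q a))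
      ≤ 2 * (u + log (2 / δ)) ^ 2 + 4 := by
  set P := uniformMixture Q
  set D : Fin M → ℝ := fun j => dKL (Q j) P
  have hM' : (M : ℝ) ≠ 0 := (Nat.cast_pos.mpr hM).ne'
  have hP : ∀ a, 0 < P a := uniformMixture_pos hM hQ
  have hw : ∑ _j : Fin M, (M : ℝ)⁻¹ = 1 := by simp [hM']
  have hD_le : ∀ j, D j ≤ log M := fun j =>
    dKL_le_log_of_le_mul (hQ j) (hQ1 j) hP (le_mul_uniformMixture (fun k a => (hQ k a).le) j)
  have hexp : ∑ j, (M : ℝ)⁻¹ * exp (log M - D j) ≤ exp (u + log (2 / δ)) := by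
    calc ∑ j, (M : ℝ)⁻¹ * exp (log M - D j) = ∑ j, exp (-D j) := by
          refine sum_congr rfl fun j _ => ?_
          rw [sub_eq_add_neg, exp_add, exp_log (by positivity), inv_mul_cancel_left₀ hM']
      _ ≤ 2 / δ * exp u :=
          sum_exp_neg_dKL_le hQ hQ1 hP (sum_uniformMixture hM hQ1) hg hδ hu hdec hvar
      _ = exp (u + log (2 / δ)) := by rw [exp_add, exp_log (by positivity), mul_comm]
  calc discreteVar (fun _ => (M : ℝ)⁻¹) (fun j => ∑ a, Q j a * log (P a))
      ≤ ∑ j, (M : ℝ)⁻¹ * (∑ a, Q j a * log (P a) - (h - log M)) ^ 2 :=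
        discreteVar_le_sum_mul_sub_sq hw _ _
    _ = ∑ j, (M : ℝ)⁻¹ * (log M - D j) ^ 2 := by
        refine sum_congr rfl fun j _ => ?_
        rw [sum_mul_log_eq_sub_dKL (hQ j) hP, hH j]
        ring
    _ ≤ 2 * (u + log (2 / δ)) ^ 2 + 4 :=
        sum_mul_sq_le_of_sum_mul_exp_le (fun _ => by positivity) hw
          (fun j => sub_nonneg.mpr (hD_le j)) hexp

theorem discreteVar_log_uniformMixture_le [Fintype α] (hM : 0 < M) (hQ : ∀ j a, 0 < Q j a)
    (hQ1 : ∀ j, ∑ a, Q j a = 1) {h : ℝ} (hH : ∀ j, ∑ a, Q j a * log (Q j a) = h)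
    {g : α → Fin M → ℝ} (hg : ∀ a, IsPMF (g a)) {ε : ℝ} (hε : ε < 1)
    (herr : ∀ j, ∑ a, Q j a * (1 - g a j) ≤ ε) {σ u : ℝ} (hu : 0 < u)
    (hvar_log : ∀ j, discreteVar (Q j) (fun a => log (uniformMixture Q a)) ≤ σ)
    (hvar_dens : ∀ j,
      discreteVar (Q j) (fun a => log (Q j a / uniformMixture Q a)) ≤ (1 - ε) / 2 * u ^ 2) :
    discreteVar (uniformMixture Q) (fun a => log (uniformMixture Q a))
      ≤ σ + (2 * (u + log (2 / (1 - ε))) ^ 2 + 4) := by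
  have hw : ∑ _j : Fin M, (M : ℝ)⁻¹ = 1 := by simp [(Nat.cast_pos.mpr hM).ne']
  have hdec : ∀ j, 1 - ε ≤ ∑ a, Q j a * g a j := fun j => by
    have := herr j
    simp only [mul_sub, mul_one, sum_sub_distrib, hQ1 j] at this
    linarith
  have total := discreteVar_mixture (fun _ => (M : ℝ)⁻¹) Q (fun a => log (uniformMixture Q a))
  rw [show (fun a => ∑ j, (M : ℝ)⁻¹ * Q j a) = uniformMixture Q from
    funext fun a => (mul_sum _ _ _).symm] at total
  rw [total]
  gcongr
  · calc ∑ j, (M : ℝ)⁻¹ * discreteVar (Q j) (fun a => log (uniformMixture Q a))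
        ≤ ∑ j, (M : ℝ)⁻¹ * σ :=
          sum_le_sum fun j _ => mul_le_mul_of_nonneg_left (hvar_log j) (by positivity)
      _ = σ := by rw [← sum_mul, hw, one_mul]
  · exact discreteVar_sum_mul_log_uniformMixture_le hM hQ hQ1 hH hg (sub_pos.mpr hε) hu hdec
      hvar_dens

end UniformMixture

theorem abs_log_update_sub_le {ι β : Type*} [DecidableEq ι] {F : (ι → β) → ℝ}
    (hF : ∀ y, 0 < F y) {ρ : ℝ} (hρ : ∀ y i b, F (Function.update y i b) ≤ ρ * F y)
    (y : ι → β) (i : ι) (b : β) : |log (F (Function.update y i b)) - log (F y)| ≤ log ρ := by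
  have log_le : ∀ y' y'', F y' ≤ ρ * F y'' → log (F y') - log (F y'') ≤ log ρ := by
    intro y' y'' hle
    have hρ0 : 0 < ρ := pos_of_mul_pos_left ((hF y').trans_le hle) (hF y'').le
    have := log_le_log (hF y') hle
    rw [log_mul hρ0.ne' (hF y'').ne'] at this
    linarith
  have back := hρ (Function.update y i b) i (y i)
  rw [Function.update_idem, Function.update_eq_self] at back
  rw [abs_le]
  constructor <;> linarith [log_le _ _ (hρ y i b), log_le _ _ back]

section Channel

variable {𝒳 𝒴 : Type*} [Fintype 𝒳] [Fintype 𝒴] {W : 𝒳 → 𝒴 → ℝ}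

theorem exists_forall_le_mul_of_pos (hWpos : ∀ x y, 0 < W x y) :
    ∃ ρ : ℝ, ∀ x b b', W x b ≤ ρ * W x b' := by
  obtain ⟨ρ, hρ⟩ := Finite.exists_le fun p : 𝒳 × 𝒴 × 𝒴 => W p.1 p.2.1 / W p.1 p.2.2
  exact ⟨ρ, fun x b b' => (div_le_iff₀ (hWpos x b')).mp (hρ (x, b, b'))⟩

theorem prodW_pos (hWpos : ∀ x y, 0 < W x y) (n : ℕ) (x : Fin n → 𝒳) (y : Fin n → 𝒴) :
    0 < prodW W n x y :=
  prod_pos fun _ _ => hWpos _ _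

theorem sum_prodW (hW : IsDMC W) (n : ℕ) (x : Fin n → 𝒳) : ∑ y, prodW W n x y = 1 :=
  sum_prod_eq_one fun i => (hW (x i)).2

theorem codeOut_pos (hWpos : ∀ x y, 0 < W x y) {n M : ℕ} (hM : 0 < M)
    (c : Fin M → Fin n → 𝒳) (y : Fin n → 𝒴) : 0 < codeOut W c y :=
  uniformMixture_pos hM (fun j => prodW_pos hWpos n (c j)) y

theorem sum_prodW_mul_log_eq (hW : IsDMC W) (hWpos : ∀ x y, 0 < W x y)
    (hH : ∀ x x', ∑ y, W x y * log (W x y) = ∑ y, W x' y * log (W x' y))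
    {n : ℕ} (x x' : Fin n → 𝒳) :
    ∑ y, prodW W n x y * log (prodW W n x y) = ∑ y, prodW W n x' y * log (prodW W n x' y) := by
  simp only [prodW, log_prod fun _ _ => (hWpos _ _).ne']
  rw [sum_prod_mul_sum_apply (fun i => (hW (x i)).2) fun i b => log (W (x i) b),
    sum_prod_mul_sum_apply (fun i => (hW (x' i)).2) fun i b => log (W (x' i) b)]
  exact sum_congr rfl fun i _ => hH _ _

theorem prodW_update_le (hWpos : ∀ x y, 0 < W x y) {ρ : ℝ}
    (hρ : ∀ x b b', W x b ≤ ρ * W x b') {n : ℕ} (x : Fin n → 𝒳) (y : Fin n → 𝒴) (i : Fin n)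
    (b : 𝒴) : prodW W n x (Function.update y i b) ≤ ρ * prodW W n x y := by
  have rest : ∏ k ∈ univ.erase i, W (x k) (Function.update y i b k)
      = ∏ k ∈ univ.erase i, W (x k) (y k) :=
    prod_congr rfl fun k hk => by rw [Function.update_of_ne (ne_of_mem_erase hk)]
  simp only [prodW, ← mul_prod_erase univ _ (mem_univ i), Function.update_self, rest, ← mul_assoc]
  exact mul_le_mul_of_nonneg_right (hρ _ _ _) (prod_nonneg fun k _ => (hWpos _ _).le)

theorem codeOut_update_le (hWpos : ∀ x y, 0 < W x y) {ρ : ℝ}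
    (hρ : ∀ x b b', W x b ≤ ρ * W x b') {n M : ℕ} (c : Fin M → Fin n → 𝒳) (y : Fin n → 𝒴)
    (i : Fin n) (b : 𝒴) : codeOut W c (Function.update y i b) ≤ ρ * codeOut W c y := by
  simp only [codeOut, mul_left_comm ρ, mul_sum]
  gcongr with j
  exact prodW_update_le hWpos hρ (c j) y i b

theorem abs_log_codeOut_update_sub_le (hWpos : ∀ x y, 0 < W x y) {ρ : ℝ}
    (hρ : ∀ x b b', W x b ≤ ρ * W x b') {n M : ℕ} (hM : 0 < M) (c : Fin M → Fin n → 𝒳)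
    (y : Fin n → 𝒴) (i : Fin n) (b : 𝒴) :
    |log (codeOut W c (Function.update y i b)) - log (codeOut W c y)| ≤ log ρ :=
  abs_log_update_sub_le (codeOut_pos hWpos hM c) (codeOut_update_le hWpos hρ c) y i b

theorem abs_log_prodW_div_codeOut_update_sub_le (hWpos : ∀ x y, 0 < W x y) {ρ : ℝ}
    (hρ : ∀ x b b', W x b ≤ ρ * W x b') {n M : ℕ} (hM : 0 < M) (c : Fin M → Fin n → 𝒳)
    (j : Fin M) (y : Fin n → 𝒴) (i : Fin n) (b : 𝒴) :
    |log (prodW W n (c j) (Function.update y i b) / codeOut W c (Function.update y i b))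
      - log (prodW W n (c j) y / codeOut W c y)| ≤ 2 * log ρ := by
  have hP := codeOut_pos hWpos hM c
  have hQ := prodW_pos hWpos n (c j)
  rw [log_div (hQ _).ne' (hP _).ne', log_div (hQ _).ne' (hP _).ne']
  have hQ_osc := abs_log_update_sub_le hQ (prodW_update_le hWpos hρ (c j)) y i b
  have hP_osc := abs_log_codeOut_update_sub_le hWpos hρ hM c y i b
  calc _ = |(log (prodW W n (c j) (Function.update y i b)) - log (prodW W n (c j) y))
        - (log (codeOut W c (Function.update y i b)) - log (codeOut W c y))| := by ring_nf
    _ ≤ 2 * log ρ := by linarith [abs_sub (log (prodW W n (c j) (Function.update y i b))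
        - log (prodW W n (c j) y)) (log (codeOut W c (Function.update y i b)) - log (codeOut W c y))]

theorem discreteVar_prodW_log_codeOut_le (hW : IsDMC W) (hWpos : ∀ x y, 0 < W x y) {ρ : ℝ}
    (hρ : ∀ x b b', W x b ≤ ρ * W x b') {n M : ℕ} (hM : 0 < M) (c : Fin M → Fin n → 𝒳)
    (j : Fin M) :
    discreteVar (prodW W n (c j)) (fun y => log (codeOut W c y)) ≤ n * log ρ ^ 2 :=
  discreteVar_prod_le_of_abs_update_sub_le (q := fun i => W (c j i))
    (fun _ _ => (hWpos _ _).le) (fun _ => (hW _).2) (abs_log_codeOut_update_sub_le hWpos hρ hM c)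

theorem discreteVar_prodW_log_div_codeOut_le (hW : IsDMC W) (hWpos : ∀ x y, 0 < W x y)
    {ρ : ℝ} (hρ : ∀ x b b', W x b ≤ ρ * W x b') {n M : ℕ} (hM : 0 < M)
    (c : Fin M → Fin n → 𝒳) (j : Fin M) :
    discreteVar (prodW W n (c j)) (fun y => log (prodW W n (c j) y / codeOut W c y))
      ≤ n * (2 * log ρ) ^ 2 :=
  discreteVar_prod_le_of_abs_update_sub_le (q := fun i => W (c j i))
    (h := fun y => log (prodW W n (c j) y / codeOut W c y)) (fun _ _ => (hWpos _ _).le)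
    (fun _ => (hW _).2) (abs_log_prodW_div_codeOut_update_sub_le hWpos hρ hM c j)

end Channel

theorem output_logvar_linear_DMC_general
    {𝒳 𝒴 : Type*} [Fintype 𝒳] [Fintype 𝒴]
    (W : 𝒳 → 𝒴 → ℝ) (hW : IsDMC W) (hWpos : ∀ x y, 0 < W x y)
    (hHconst : ∀ x x' : 𝒳,
      -∑ y, W x y * Real.log (W x y) = -∑ y, W x' y * Real.log (W x' y))
    (ε : ℝ) (hε1 : ε < 1) :
    ∃ a : ℝ, 0 < a ∧ ∃ N : ℕ,
      ∀ n : ℕ, N ≤ n → ∀ (M : ℕ), 0 < M →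
        ∀ (c : Fin M → Fin n → 𝒳) (g : (Fin n → 𝒴) → Fin M → ℝ),
          (∀ y, IsPMF (g y)) →
          (∀ j : Fin M, ∑ y, prodW W n (c j) y * (1 - g y j) ≤ ε) →
          outLogVar W c ≤ a * n := by
  obtain ⟨ρ, hρ⟩ := exists_forall_le_mul_of_pos hWpos
  have hε : 0 < 1 - ε := sub_pos.mpr hε1
  set s := 8 * log ρ ^ 2 / (1 - ε) + 1
  have hs : (1 - ε) / 2 * s = 4 * log ρ ^ 2 + (1 - ε) / 2 := by
    simp only [s]
    field_simp
    ring
  refine ⟨log ρ ^ 2 + 4 * s + 4 * log (2 / (1 - ε)) ^ 2 + 4, by positivity, 1, ?_⟩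
  intro n hn M hM c g hg herr
  have hn1 : (1 : ℝ) ≤ n := by exact_mod_cast hn
  set u := √(s * n)
  have hu2 : u ^ 2 = s * n := sq_sqrt (by positivity)
  have hvar_dens (j : Fin M) : discreteVar (prodW W n (c j))
      (fun y => log (prodW W n (c j) y / codeOut W c y)) ≤ (1 - ε) / 2 * u ^ 2 := by
    refine (discreteVar_prodW_log_div_codeOut_le hW hWpos hρ hM c j).trans ?_
    rw [hu2, ← mul_assoc, hs]
    nlinarith
  have hH (j : Fin M) := sum_prodW_mul_log_eq hW hWpos (fun x x' => neg_inj.mp (hHconst x x'))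
    (c j) (c ⟨0, hM⟩)
  calc outLogVar W c ≤ n * log ρ ^ 2 + (2 * (u + log (2 / (1 - ε))) ^ 2 + 4) :=
        discreteVar_log_uniformMixture_le hM (fun j => prodW_pos hWpos n (c j))
          (fun j => sum_prodW hW n (c j)) hH hg hε1 herr (sqrt_pos.mpr (by positivity))
          (discreteVar_prodW_log_codeOut_le hW hWpos hρ hM c) hvar_dens
    _ ≤ (log ρ ^ 2 + 4 * s + 4 * log (2 / (1 - ε)) ^ 2 + 4) * n := by
      nlinarith [sq_nonneg (u - log (2 / (1 - ε))), sq_nonneg (log (2 / (1 - ε)))]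

/-- Theorem 23 of the paper: for a DMC with positive transition matrix and
constant conditional output entropy `H(W(·|x))`, there are a constant
`a = a(ε, W) > 0` and a threshold `N` such that every `(n, Mₙ, ε)_{max,det}` code
with `n ≥ N` satisfies `Var[log P_{Y^n}(Y^n)] ≤ a n`. -/
theorem output_logvar_linear_DMC
    {𝒳 𝒴 : Type*} [Fintype 𝒳] [Fintype 𝒴]
    (W : 𝒳 → 𝒴 → ℝ) (hW : IsDMC W) (hWpos : ∀ x y, 0 < W x y)
    (hHconst : ∀ x x' : 𝒳,
      -∑ y, W x y * Real.log (W x y) = -∑ y, W x' y * Real.log (W x' y))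
    (ε : ℝ) (hε0 : 0 ≤ ε) (hε1 : ε < 1) :
    ∃ a : ℝ, 0 < a ∧ ∃ N : ℕ,
      ∀ n : ℕ, N ≤ n → ∀ (M : ℕ), 0 < M →
        ∀ (c : Fin M → Fin n → 𝒳) (g : (Fin n → 𝒴) → Fin M → ℝ),
          (∀ y, IsPMF (g y)) →
          (∀ j : Fin M, ∑ y, prodW W n (c j) y * (1 - g y j) ≤ ε) →
          outLogVar W c ≤ a * n :=
  output_logvar_linear_DMC_general W hW hWpos hHconst ε hε1
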